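/- arXiv:2511.14637 — 7 statements merged into one kernel-verified Lean document; each statement's English description precedes it below -/
import Mathlib

section
/- For the van der Corput sequence in base 2, if 2^k ≤ n < 2^{k+1}, then every gap between consecutive points of the sorted set {0, x_1, ..., x_n} (including the gap from the largest point to 1) has length either 2^{-k} or 2^{-(k+1)}. -/
/-!
The first `2 ^ (k + 1)` points of the sequence all lie on the grid `2^{-(k+1)} ℤ`, while the first
`2 ^ k` points are exactly the coarser grid points `c / 2 ^ k`, `c < 2 ^ k`. Hence two consecutive
points `a / 2 ^ (k + 1) < b / 2 ^ (k + 1)` (or the last point and `1`) have no even number strictly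
between `a` and `b`, which forces `b - a ∈ {1, 2}`.
-/

noncomputable def vdc (m : ℕ) : ℝ :=
  ∑ j ∈ Finset.range m, if m.testBit j then (1 : ℝ) / 2 ^ (j + 1) else 0

open Finset

theorem vdc_zero : vdc 0 = 0 := by
  simp [vdc]

theorem vdc_eq_sum_range_of_le {m L : ℕ} (h : m ≤ L) :
    vdc m = ∑ j ∈ range L, if m.testBit j then (1 : ℝ) / 2 ^ (j + 1) else 0 := by
  refine sum_subset (range_subset_range.2 h) fun j _ hj => ?_
  have hmj : m < 2 ^ j :=
    m.lt_two_pow_self.trans_le (Nat.pow_le_pow_right two_pos (by simpa using hj))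
  simp [Nat.testBit_eq_false_of_lt hmj]

theorem vdc_eq_mod_two_add (m : ℕ) : vdc m = ((m % 2 : ℕ) : ℝ) / 2 + vdc (m / 2) / 2 := by
  rw [vdc_eq_sum_range_of_le m.le_succ, sum_range_succ',
    vdc_eq_sum_range_of_le (Nat.div_le_self m 2), sum_div, add_comm]
  congr 1
  · rcases Nat.mod_two_eq_zero_or_one m with h | h <;> simp [Nat.testBit_zero, h]
  · refine sum_congr rfl fun j _ => ?_
    rw [Nat.testBit_succ]
    split <;> ring

theorem exists_vdc_eq_div_of_lt_two_pow {K m : ℕ} (hm : m < 2 ^ K) :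
    ∃ a : ℕ, a < 2 ^ K ∧ vdc m = a / 2 ^ K := by
  induction K generalizing m with
  | zero => exact ⟨0, by simp, by simp [show m = 0 by simpa using hm, vdc_zero]⟩
  | succ K ih =>
    obtain ⟨a, ha, hva⟩ := ih (m := m / 2) (by rw [pow_succ] at hm; omega)
    refine ⟨m % 2 * 2 ^ K + a, by rw [pow_succ]; nlinarith [Nat.mod_lt m two_pos], ?_⟩
    rw [vdc_eq_mod_two_add, hva]
    push_cast
    field_simp
    ring

theorem exists_lt_two_pow_vdc_eq_div {K a : ℕ} (ha : a < 2 ^ K) :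
    ∃ m : ℕ, m < 2 ^ K ∧ vdc m = a / 2 ^ K := by
  induction K generalizing a with
  | zero => exact ⟨0, by simp, by simp [show a = 0 by simpa using ha, vdc_zero]⟩
  | succ K ih =>
    obtain ⟨q, r, hr, rfl⟩ : ∃ q r, r < 2 ^ K ∧ a = 2 ^ K * q + r :=
      ⟨a / 2 ^ K, a % 2 ^ K, Nat.mod_lt a (by positivity), (Nat.div_add_mod a _).symm⟩
    have hq : q < 2 := by rw [pow_succ] at ha; nlinarith
    obtain ⟨m, hm, hvm⟩ := ih hr
    refine ⟨2 * m + q, by rw [pow_succ]; omega, ?_⟩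
    rw [vdc_eq_mod_two_add, show (2 * m + q) / 2 = m by omega,
      show (2 * m + q) % 2 = q by omega, hvm]
    push_cast
    field_simp
    ring

theorem sub_eq_of_no_coarse_point_between {k a b : ℕ} {u v : ℝ} (hu : u = a / 2 ^ (k + 1))
    (hv : v = b / 2 ^ (k + 1)) (huv : u < v) (hb : b ≤ 2 ^ (k + 1))
    (hempty : ∀ c : ℕ, c < 2 ^ k → ¬ (u < c / 2 ^ k ∧ c / 2 ^ k < v)) :
    v - u = 1 / 2 ^ k ∨ v - u = 1 / 2 ^ (k + 1) := by
  have hcoarse (c : ℕ) : (c : ℝ) / 2 ^ k = ((2 * c : ℕ) : ℝ) / 2 ^ (k + 1) := by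
    push_cast; field_simp; ring
  have hab : a < b := by
    rw [hu, hv] at huv
    exact_mod_cast (div_lt_div_iff_of_pos_right (by positivity)).1 huv
  -- otherwise `2 * (a / 2 + 1)` is an even number strictly between `a` and `b`
  have hba : b ≤ a + 2 := by
    by_contra! hba
    refine hempty (a / 2 + 1) (by rw [pow_succ] at hb; omega) ?_
    rw [hcoarse, hu, hv]
    constructor <;> gcongr <;> omega
  obtain rfl | rfl : b = a + 1 ∨ b = a + 2 := by omega
  · right; rw [hu, hv]; push_cast; ring
  · left; rw [hu, hv]; push_cast; field_simp; ring

theorem stmt_2_general (k n : ℕ) (h1 : 2 ^ k ≤ n) (h2 : n < 2 ^ (k + 1)) (y : ℕ → ℝ)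
    (hmono : ∀ i j, i < j → j ≤ n → y i < y j)
    (hlt1 : y n < 1)
    (himg : ∀ v : ℝ, (∃ i, i ≤ n ∧ y i = v) ↔
      (v = 0 ∨ ∃ m, 1 ≤ m ∧ m ≤ n ∧ vdc m = v)) :
    (∀ i < n, y (i + 1) - y i = 1 / 2 ^ k ∨ y (i + 1) - y i = 1 / 2 ^ (k + 1)) ∧
      (1 - y n = 1 / 2 ^ k ∨ 1 - y n = 1 / 2 ^ (k + 1)) := by
  have hsm : StrictMonoOn y (Set.Iic n) := fun i hi j hj hij => hmono i j hij hj
  have hfine : ∀ i ≤ n, ∃ a : ℕ, a < 2 ^ (k + 1) ∧ y i = a / 2 ^ (k + 1) := by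
    intro i hi
    rcases (himg (y i)).1 ⟨i, hi, rfl⟩ with h0 | ⟨m, -, hmn, hm⟩
    · exact ⟨0, by positivity, by simp [h0]⟩
    · exact hm ▸ exists_vdc_eq_div_of_lt_two_pow (hmn.trans_lt h2)
  have hcoarse : ∀ c : ℕ, c < 2 ^ k → ∃ j ≤ n, y j = c / 2 ^ k := by
    intro c hc
    obtain ⟨m, hm, hvm⟩ := exists_lt_two_pow_vdc_eq_div hc
    refine (himg _).2 ?_
    rcases Nat.eq_zero_or_pos m with rfl | hm0
    · exact Or.inl (by rw [← hvm, vdc_zero])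
    · exact Or.inr ⟨m, hm0, hm.le.trans h1, hvm⟩
  have hempty : ∀ (u v : ℝ), (∀ j ≤ n, u < y j → v ≤ y j) →
      ∀ c : ℕ, c < 2 ^ k → ¬ (u < c / 2 ^ k ∧ c / 2 ^ k < v) := by
    rintro u v hv c hc ⟨hic, hcv⟩
    obtain ⟨j, hj, hjc⟩ := hcoarse c hc
    rw [← hjc] at hic hcv
    exact (hv j hj hic).not_gt hcv
  refine ⟨fun i hi => ?_, ?_⟩
  · obtain ⟨a, -, hya⟩ := hfine i hi.le
    obtain ⟨b, hb, hyb⟩ := hfine (i + 1) hi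
    refine sub_eq_of_no_coarse_point_between hya hyb (hmono i (i + 1) i.lt_succ_self hi) hb.le
      (hempty _ _ fun j hj hij => ?_)
    exact hsm.monotoneOn hi hj ((hsm.lt_iff_lt hi.le hj).1 hij)
  · obtain ⟨a, -, hya⟩ := hfine n le_rfl
    refine sub_eq_of_no_coarse_point_between (b := 2 ^ (k + 1)) hya (by push_cast; simp) hlt1
      le_rfl (hempty _ _ fun j hj hnj => absurd hnj ?_)
    exact not_lt.2 (hsm.monotoneOn hj Set.self_mem_Iic hj)

theorem stmt_2 (k n : ℕ) (h1 : 2 ^ k ≤ n) (h2 : n < 2 ^ (k + 1)) (y : ℕ → ℝ)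
    (hy0 : y 0 = 0)
    (hmono : ∀ i j, i < j → j ≤ n → y i < y j)
    (hlt1 : y n < 1)
    (himg : ∀ v : ℝ, (∃ i, i ≤ n ∧ y i = v) ↔
      (v = 0 ∨ ∃ m, 1 ≤ m ∧ m ≤ n ∧ vdc m = v)) :
    (∀ i < n, y (i + 1) - y i = 1 / 2 ^ k ∨ y (i + 1) - y i = 1 / 2 ^ (k + 1)) ∧
      (1 - y n = 1 / 2 ^ k ∨ 1 - y n = 1 / 2 ^ (k + 1)) :=
  stmt_2_general k n h1 h2 y hmono hlt1 himg
end

section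
/- Let x_m denote the m-th element of the van der Corput sequence in base 2. For all k ≥ 0, all a ≥ 0 with a ≤ k, and all 1 ≤ m < 2^{a+1}, the self-similarity identity holds: (2^k / 2^{a+1}) · x_{2^k + m·2^{k-a-1}} = x_m + 1/2^{a+2}. -/
/-!
Writing `k = a + 1 + c`, the number `2 ^ k + m * 2 ^ c` has a leading bit in position `k`
followed by the bits of `m` shifted up by `c`. The radical inverse turns the leading bit into
`1 / 2 ^ (k + 1)` and the shift into division by `2 ^ c`; multiplying by `2 ^ c` gives the identity.
-/

open Finset

lemma sum_range_testBit_of_lt_two_pow {m n n' : ℕ} (f : ℕ → ℝ) (hn : n ≤ n') (hm : m < 2 ^ n) :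
    ∑ j ∈ range n', (if m.testBit j then f j else 0) =
      ∑ j ∈ range n, (if m.testBit j then f j else 0) := by
  refine (sum_subset (range_subset_range.2 hn) fun j _ hj => ?_).symm
  have hmj : m < 2 ^ j := hm.trans_le (Nat.pow_le_pow_right two_pos (by simpa using hj))
  simp [Nat.testBit_lt_two_pow hmj]

lemma vdc_eq_sum_range {m n : ℕ} (h : m < 2 ^ n) :
    vdc m = ∑ j ∈ range n, if m.testBit j then (1 : ℝ) / 2 ^ (j + 1) else 0 := by
  rw [vdc, ← sum_range_testBit_of_lt_two_pow _ (le_max_left m n) Nat.lt_two_pow_self,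
    sum_range_testBit_of_lt_two_pow _ (le_max_right m n) h]

lemma vdc_two_pow_add {m n : ℕ} (h : m < 2 ^ n) : vdc (2 ^ n + m) = vdc m + 1 / 2 ^ (n + 1) := by
  have h' : 2 ^ n + m < 2 ^ (n + 1) := by rw [pow_succ]; omega
  rw [vdc_eq_sum_range h', sum_range_succ, vdc_eq_sum_range h, Nat.testBit_two_pow_add_eq,
    Nat.testBit_lt_two_pow h, Bool.not_false, if_pos rfl]
  congr 1
  refine sum_congr rfl fun j hj => ?_
  rw [Nat.testBit_two_pow_add_gt (mem_range.1 hj)]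

lemma vdc_two_mul (m : ℕ) : vdc (2 * m) = vdc m / 2 := by
  have h : 2 * m < 2 ^ (m + 1) := by
    rw [pow_succ']; exact Nat.mul_lt_mul_of_pos_left Nat.lt_two_pow_self two_pos
  rw [vdc_eq_sum_range h, sum_range_succ', vdc_eq_sum_range (Nat.lt_two_pow_self (n := m)), sum_div]
  simp only [Nat.testBit_succ, Nat.mul_div_cancel_left m two_pos, Nat.testBit_zero,
    Nat.mul_mod_right, zero_ne_one, decide_false, Bool.false_eq_true, if_false, add_zero]
  refine sum_congr rfl fun j _ => ?_
  split_ifs <;> ring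

lemma vdc_mul_two_pow (m c : ℕ) : vdc (m * 2 ^ c) = vdc m / 2 ^ c := by
  induction c with
  | zero => simp
  | succ c ih => rw [pow_succ', mul_left_comm, vdc_two_mul, ih, div_div, mul_comm, ← pow_succ']

theorem stmt_3_general (k a m : ℕ) (ha : a + 1 ≤ k) (hm2 : m < 2 ^ (a + 1)) :
    ((2 : ℝ) ^ k / 2 ^ (a + 1)) * vdc (2 ^ k + m * 2 ^ (k - a - 1)) =
      vdc m + 1 / 2 ^ (a + 2) := by
  obtain ⟨c, rfl⟩ : ∃ c, k = a + 1 + c := ⟨k - (a + 1), by omega⟩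
  have hmc : m * 2 ^ c < 2 ^ (a + 1 + c) := by
    rw [pow_add]; exact Nat.mul_lt_mul_of_pos_right hm2 (by positivity)
  rw [show a + 1 + c - a - 1 = c by omega, vdc_two_pow_add hmc, vdc_mul_two_pow]
  field_simp
  ring

theorem stmt_3 (k a m : ℕ) (ha : a + 1 ≤ k) (hm1 : 1 ≤ m) (hm2 : m < 2 ^ (a + 1)) :
    ((2 : ℝ) ^ k / 2 ^ (a + 1)) * vdc (2 ^ k + m * 2 ^ (k - a - 1)) =
      vdc m + 1 / 2 ^ (a + 2) :=
  stmt_3_general k a m ha hm2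
end

section
/- Let x_m be the van der Corput sequence in base 2, and let a+1 ≤ k. For 2^k ≤ m < 2^{k+1}, x_m ≤ 2^{a+1}/2^k if and only if m - 2^k is a multiple of 2^{k-a-1}. -/
private lemma geo_aux (t : ℕ) : ∑ i ∈ Finset.range t, 2 ^ i = 2 ^ t - 1 := by
  induction t with
  | zero => simp
  | succ s ih =>
    rw [Finset.sum_range_succ, ih, pow_succ]
    have : 1 ≤ 2 ^ s := Nat.one_le_two_pow
    omega

theorem stmt_4 (k a : ℕ) (ha : a + 1 ≤ k) (m : ℕ) (hm1 : 2 ^ k ≤ m)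
    (hm2 : m < 2 ^ (k + 1)) :
    vdc m ≤ (2 : ℝ) ^ (a + 1) / 2 ^ k ↔ 2 ^ (k - a - 1) ∣ (m - 2 ^ k) := by
  set n := k - a - 1 with hn
  have hk : k = n + a + 1 := by omega
  -- the bit-reversal of m over k+1 bits
  set R : ℕ := ∑ j ∈ Finset.range (k + 1), if m.testBit j then 2 ^ (k - j) else 0 with hRdef
  -- Step A: vdc m is a sum over range (k+1)
  have hstep : vdc m
      = ∑ j ∈ Finset.range (k + 1), if m.testBit j then (1 : ℝ) / 2 ^ (j + 1) else 0 := by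
    unfold vdc
    refine (Finset.sum_subset ?_ ?_).symm
    · intro j hj
      simp only [Finset.mem_range] at *
      have h1 : k < 2 ^ k := Nat.lt_two_pow_self
      omega
    · intro j hj hj'
      simp only [Finset.mem_range, not_lt] at hj'
      have : m.testBit j = false := by
        apply Nat.testBit_eq_false_of_lt
        calc m < 2 ^ (k + 1) := hm2
          _ ≤ 2 ^ j := Nat.pow_le_pow_right (by norm_num) hj'
      simp [this]
  -- Step B: vdc m = R / 2^(k+1)
  have hR : vdc m = (R : ℝ) / 2 ^ (k + 1) := by
    rw [hstep, hRdef]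
    push_cast
    rw [Finset.sum_div]
    refine Finset.sum_congr rfl ?_
    intro j hj
    simp only [Finset.mem_range] at hj
    split
    · rw [div_eq_div_iff (by positivity) (by positivity)]
      rw [one_mul, ← pow_add]
      congr 1
      omega
    · simp
  -- Step C: the real inequality reduces to a natural-number inequality
  have hC : (vdc m ≤ (2 : ℝ) ^ (a + 1) / 2 ^ k) ↔ R ≤ 2 ^ (a + 2) := by
    rw [hR, div_le_div_iff₀ (by positivity) (by positivity),
      show ((2 : ℝ) ^ (a + 1) * 2 ^ (k + 1)) = 2 ^ (a + 2) * 2 ^ k by ring,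
      mul_le_mul_iff_of_pos_right (by positivity)]
    exact_mod_cast Iff.rfl
  -- Step D: top bit of m is set
  have hbitk : m.testBit k = true := by
    rw [Nat.testBit_eq_decide_div_mod_eq]
    have hdiv : m / 2 ^ k = 1 := by
      apply Nat.div_eq_of_lt_le (by omega)
      have : (1 + 1) * 2 ^ k = 2 ^ (k + 1) := by ring
      omega
    simp [hdiv]
  -- Step E: divisibility ↔ low bits vanish
  have hE : (2 ^ n ∣ (m - 2 ^ k)) ↔ ∀ j < n, m.testBit j = false := by
    have hd2 : (2 : ℕ) ^ n ∣ 2 ^ k := pow_dvd_pow 2 (by omega)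
    have h1 : (2 ^ n ∣ (m - 2 ^ k)) ↔ 2 ^ n ∣ m := by
      constructor
      · intro h
        have := dvd_add h hd2
        rwa [Nat.sub_add_cancel hm1] at this
      · intro h
        exact Nat.dvd_sub h hd2
    rw [h1, Nat.dvd_iff_mod_eq_zero]
    constructor
    · intro h j hj
      have := Nat.testBit_mod_two_pow m n j
      rw [h] at this
      simp only [Nat.zero_testBit, hj, decide_true, Bool.true_and] at this
      exact this.symm
    · intro h
      apply Nat.eq_of_testBit_eq
      intro i
      rw [Nat.testBit_mod_two_pow, Nat.zero_testBit]
      by_cases hi : i < n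
      · simp [h i hi]
      · simp [hi]
  -- Step F: R ≤ 2^(a+2) ↔ low bits vanish
  have hF : R ≤ 2 ^ (a + 2) ↔ ∀ j < n, m.testBit j = false := by
    constructor
    · intro hle j hj
      by_contra hbit
      rw [Bool.not_eq_false] at hbit
      have hsub : ({j, k} : Finset ℕ) ⊆ Finset.range (k + 1) := by
        intro x hx
        simp only [Finset.mem_insert, Finset.mem_singleton] at hx
        rcases hx with rfl | rfl <;> simp [Finset.mem_range] <;> omega
      have hjk : j ≠ k := by omega
      have hpair : ∑ x ∈ ({j, k} : Finset ℕ),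
          (if m.testBit x then 2 ^ (k - x) else 0) = 2 ^ (k - j) + 1 := by
        rw [Finset.sum_pair hjk]
        simp [hbit, hbitk]
      have hRge : 2 ^ (k - j) + 1 ≤ R := by
        rw [← hpair, hRdef]
        exact Finset.sum_le_sum_of_subset hsub
      have hpow : 2 ^ (a + 2) ≤ 2 ^ (k - j) := Nat.pow_le_pow_right (by norm_num) (by omega)
      omega
    · intro hlow
      have h1 : R = ∑ j ∈ Finset.Ico n (k + 1), if m.testBit j then 2 ^ (k - j) else 0 := by
        rw [hRdef]
        refine (Finset.sum_subset ?_ ?_).symm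
        · intro x hx
          simp only [Finset.mem_Ico, Finset.mem_range] at *
          omega
        · intro x hx hx'
          simp only [Finset.mem_Ico, Finset.mem_range, not_and, not_le, not_lt] at hx hx'
          have : x < n := by omega
          simp [hlow x this]
      have h2 : R ≤ ∑ j ∈ Finset.Ico n (k + 1), 2 ^ (k - j) := by
        rw [h1]
        refine Finset.sum_le_sum ?_
        intro i _
        split <;> simp
      have h3 : ∑ j ∈ Finset.Ico n (k + 1), 2 ^ (k - j)
          = ∑ i ∈ Finset.range (a + 2), 2 ^ (a + 1 - i) := by
        rw [Finset.sum_Ico_eq_sum_range]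
        have hcard : k + 1 - n = a + 2 := by omega
        rw [hcard]
        refine Finset.sum_congr rfl ?_
        intro i hi
        simp only [Finset.mem_range] at hi
        congr 1
        omega
      have h4 : ∑ i ∈ Finset.range (a + 2), 2 ^ (a + 1 - i)
          = ∑ i ∈ Finset.range (a + 2), 2 ^ i := by
        have := Finset.sum_range_reflect (fun i => 2 ^ i) (a + 2)
        simpa using this
      rw [h3, h4, geo_aux] at h2
      exact h2.trans (Nat.sub_le _ _)
  rw [hC, hF, hE]
end

section
/- Let φ = (1+√5)/2 and let {y} denote the fractional part of y. There exists an absolute constant C such that for every k ≥ 1 and every interval [x, x+ε] ⊆ [0,1] (interpreted cyclically on the circle R/Z), the number of m with 0 ≤ m ≤ F_k − 1 and {mφ} ∈ [x, x+ε] differs from F_k·ε by at most C. -/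
/-!
Write `N = F_k`. Binet's formula gives `F_k φ = F_{k+1} - ψ^k`, so for `m < N` the point `m φ`
lies within `|ψ|^k ≤ 1/N` of `σ m / N` modulo `1`, where `σ m = m F_{k+1} mod N`. Since
`F_k` and `F_{k+1}` are coprime, `σ` permutes `{0, …, N - 1}`: the points `{m φ}` are the lattice
`{j / N}`, each moved by at most `1/N`. An arc of length `β` contains `N β ± 1` lattice points,
and widening or shrinking the arc by `1/N` at both ends absorbs the perturbation, so `C = 3`
works.
-/

open Finset Real goldenRatio

noncomputable def arcCount (p : ℕ → ℝ) (N : ℕ) (x ε : ℝ) : ℕ :=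
  #{m ∈ range N | Int.fract (p m - x) ≤ ε}

theorem Int.fract_add_le_fract_add_of_nonneg {R : Type*} [Ring R] [LinearOrder R]
    [IsStrictOrderedRing R] [FloorRing R] (a : R) {t : R} (ht : 0 ≤ t) :
    Int.fract (a + t) ≤ Int.fract a + t := by
  rw [Int.fract, Int.fract, sub_add_eq_add_sub, sub_le_sub_iff_left]
  exact Int.cast_le.mpr (Int.floor_mono (le_add_of_nonneg_right ht))

theorem arcCount_fract (p : ℕ → ℝ) (N : ℕ) (x ε : ℝ) :
    arcCount p N (Int.fract x) ε = arcCount p N x ε := by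
  refine congrArg card (filter_congr fun m _ => ?_)
  rw [show p m - Int.fract x = p m - x + ⌊x⌋ by rw [Int.fract]; ring, Int.fract_add_intCast]

section Approximation

variable {p q : ℕ → ℝ} {σ : ℕ → ℕ} {N : ℕ} {δ : ℝ}

theorem arcCount_le_of_approx (hmaps : Set.MapsTo σ (range N) (range N))
    (hinj : Set.InjOn σ (range N)) (happrox : ∀ m < N, ∃ n : ℤ, |p m - q (σ m) - n| ≤ δ)
    (x ε : ℝ) : arcCount p N x ε ≤ arcCount q N (x - δ) (ε + 2 * δ) := by
  refine card_le_card_of_injOn σ (fun m hm => ?_) (hinj.mono (coe_subset.mpr (filter_subset _ _)))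
  obtain ⟨hmN, hm⟩ := mem_filter.mp hm
  obtain ⟨n, hn⟩ := happrox m (mem_range.mp hmN)
  have hn' := abs_le.mp hn
  set e := p m - q (σ m) - n
  have hshift : q (σ m) - (x - δ) = p m - x + (δ - e) - n := by ring
  refine mem_filter.mpr ⟨hmaps hmN, ?_⟩
  rw [hshift, Int.fract_sub_intCast]
  linarith [Int.fract_add_le_fract_add_of_nonneg (p m - x) (by linarith : 0 ≤ δ - e)]

theorem le_arcCount_of_approx (hsurj : Set.SurjOn σ (range N) (range N))
    (happrox : ∀ m < N, ∃ n : ℤ, |p m - q (σ m) - n| ≤ δ) (x ε : ℝ) :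
    arcCount q N (x + δ) (ε - 2 * δ) ≤ arcCount p N x ε := by
  refine card_le_card_of_surjOn σ (fun j hj => ?_)
  obtain ⟨hjN, hj⟩ := mem_filter.mp hj
  obtain ⟨m, hmN, rfl⟩ := hsurj hjN
  obtain ⟨n, hn⟩ := happrox m (mem_range.mp hmN)
  have hn' := abs_le.mp hn
  set e := p m - q (σ m) - n
  have hshift : p m - x = q (σ m) - (x + δ) + (δ + e) + n := by ring
  refine ⟨m, mem_filter.mpr ⟨hmN, ?_⟩, rfl⟩
  rw [hshift, Int.fract_add_intCast]
  linarith [Int.fract_add_le_fract_add_of_nonneg (q (σ m) - (x + δ)) (by linarith : 0 ≤ δ + e)]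

end Approximation

section Lattice

variable {N : ℕ} {x β : ℝ}

-- The count is periodic in `j`, so it can be read off the window `[⌈N x⌉, ⌈N x⌉ + N)`, on which
-- `j / N - x` already lies in `[0, 1)`.
theorem arcCount_div_eq (hN : 0 < N) (hx : 0 ≤ x) (hβ : 0 ≤ β) :
    (arcCount (fun j => j / N) N x β : ℝ) =
      min (N : ℝ) (⌊N * (x + β)⌋₊ + 1 - ⌈N * x⌉₊) := by
  have hN' : (0 : ℝ) < N := Nat.cast_pos.mpr hN
  have hperiodic : Function.Periodic (fun j : ℕ => Int.fract ((j : ℝ) / N - x) ≤ β) N := by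
    intro j
    simp only [Nat.cast_add, add_div, div_self hN'.ne', add_sub_right_comm, Int.fract_add_one]
  have hwindow : ∀ j ∈ Ico ⌈N * x⌉₊ (⌈N * x⌉₊ + N),
      Int.fract ((j : ℝ) / N - x) ≤ β ↔ j < ⌊N * (x + β)⌋₊ + 1 := by
    intro j hj
    obtain ⟨hrj, hjr⟩ := mem_Ico.mp hj
    have hlo : N * x ≤ j := Nat.ceil_le.mp hrj
    have hhi : (j : ℝ) + 1 ≤ ⌈N * x⌉₊ + N := by exact_mod_cast hjr
    have hceil := Nat.ceil_lt_add_one (by positivity : 0 ≤ (N : ℝ) * x)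
    rw [Int.fract_eq_self.mpr ⟨?_, ?_⟩, Nat.lt_succ_iff, Nat.le_floor_iff (by positivity),
      sub_le_iff_le_add', div_le_iff₀ hN', mul_comm]
    · rw [sub_nonneg, le_div_iff₀ hN', mul_comm]
      exact hlo
    · rw [sub_lt_iff_lt_add', div_lt_iff₀ hN']
      linarith
  have hcount : arcCount (fun j => j / N) N x β = min N (⌊N * (x + β)⌋₊ + 1 - ⌈N * x⌉₊) := by
    rw [arcCount, ← Nat.count_eq_card_filter_range,
      ← Nat.filter_Ico_card_eq_of_periodic ⌈N * x⌉₊ N _ hperiodic, filter_congr hwindow,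
      Ico_filter_lt, Nat.card_Ico]
    omega
  have hle : ⌈N * x⌉₊ ≤ ⌊N * (x + β)⌋₊ + 1 :=
    (Nat.ceil_le_floor_add_one _).trans (by gcongr; linarith)
  rw [hcount, Nat.cast_min, Nat.cast_sub hle, Nat.cast_add, Nat.cast_one]

theorem arcCount_div_le (hN : 0 < N) (x : ℝ) (hβ : 0 ≤ β) :
    (arcCount (fun j => j / N) N x β : ℝ) ≤ N * β + 1 := by
  have hy := Int.fract_nonneg x
  rw [← arcCount_fract, arcCount_div_eq hN hy hβ]
  have hceil : N * Int.fract x ≤ ⌈N * Int.fract x⌉₊ := Nat.le_ceil _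
  have hfloor : (⌊N * (Int.fract x + β)⌋₊ : ℝ) ≤ N * (Int.fract x + β) :=
    Nat.floor_le (by positivity)
  exact (min_le_right _ _).trans (by linarith)

theorem le_arcCount_div (hN : 0 < N) (x : ℝ) (hβ : β ≤ 1) :
    N * β - 1 ≤ (arcCount (fun j => j / N) N x β : ℝ) := by
  rcases lt_or_ge β 0 with hβ₀ | hβ₀
  · nlinarith [(Nat.cast_nonneg _ : (0 : ℝ) ≤ arcCount (fun j => j / N) N x β),
      (Nat.cast_nonneg N : (0 : ℝ) ≤ N)]
  have hy := Int.fract_nonneg x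
  rw [← arcCount_fract, arcCount_div_eq hN hy hβ₀]
  have hceil := Nat.ceil_lt_add_one (by positivity : 0 ≤ (N : ℝ) * Int.fract x)
  have hfloor := Nat.lt_floor_add_one ((N : ℝ) * (Int.fract x + β))
  refine le_min ?_ (by linarith)
  nlinarith [(Nat.cast_nonneg N : (0 : ℝ) ≤ N)]

end Lattice

section Fibonacci

open Nat (fib)

theorem fib_mul_abs_goldenConj_pow_le_one (k : ℕ) : (fib k : ℝ) * |ψ| ^ k ≤ 1 := by
  have hφ : 1 ≤ φ := one_lt_goldenRatio.le
  have hfib : (fib k : ℝ) * φ ≤ φ ^ k := by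
    have hmono : (fib k : ℝ) ≤ fib (k + 1) := Nat.cast_le.mpr Nat.fib_le_fib_succ
    rw [← fib_succ_sub_goldenConj_mul_fib, ← one_sub_goldenRatio]
    linarith
  rw [abs_of_neg goldenConj_neg, ← inv_goldenRatio, inv_pow, ← div_eq_mul_inv,
    div_le_one (by positivity)]
  nlinarith [(Nat.cast_nonneg _ : (0 : ℝ) ≤ fib k)]

theorem exists_abs_mul_goldenRatio_sub_le {k m : ℕ} (hm : m < fib k) :
    ∃ n : ℤ, |m * φ - ((m * fib (k + 1) % fib k : ℕ) : ℝ) / fib k - n| ≤ |ψ| ^ k := by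
  have hN : (0 : ℝ) < fib k := by exact_mod_cast hm.pos
  set r := m * fib (k + 1) % fib k
  set q := m * fib (k + 1) / fib k
  refine ⟨q, ?_⟩
  have hdiv : (r : ℝ) = m * fib (k + 1) - fib k * q := by
    rw [eq_sub_iff_add_eq]
    exact_mod_cast Nat.mod_add_div (m * fib (k + 1)) (fib k)
  have herror : m * φ - (r : ℝ) / fib k - ((q : ℤ) : ℝ) = -(m / fib k * ψ ^ k) := by
    rw [Int.cast_natCast, hdiv, ← fib_succ_sub_goldenRatio_mul_fib]
    field_simp
    ring
  have hratio : (m : ℝ) / fib k ≤ 1 := (div_le_one hN).mpr (by exact_mod_cast hm.le)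
  rw [herror, abs_neg, abs_mul, abs_pow, abs_of_nonneg (by positivity)]
  exact mul_le_of_le_one_left (by positivity) hratio

theorem bijOn_mul_fib_succ_mod_fib {k : ℕ} (hk : 0 < k) :
    Set.BijOn (fun m => m * fib (k + 1) % fib k) (range (fib k)) (range (fib k)) := by
  have hmaps : Set.MapsTo (fun m => m * fib (k + 1) % fib k) (range (fib k)) (range (fib k)) :=
    fun m _ => mem_range.mpr (Nat.mod_lt _ (Nat.fib_pos.mpr hk))
  have hinj : Set.InjOn (fun m => m * fib (k + 1) % fib k) (range (fib k)) := by
    intro m₁ hm₁ m₂ hm₂ h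
    have := Nat.ModEq.cancel_right_of_coprime (Nat.fib_coprime_fib_succ k) h
    rwa [Nat.ModEq, Nat.mod_eq_of_lt (mem_range.mp hm₁), Nat.mod_eq_of_lt (mem_range.mp hm₂)]
      at this
  exact ⟨hmaps, hinj, surjOn_of_injOn_of_card_le _ hmaps hinj le_rfl⟩

end Fibonacci

theorem stmt_8 :
    ∃ C : ℝ, 0 < C ∧ ∀ k : ℕ, 1 ≤ k → ∀ x ε : ℝ, 0 ≤ x → x ≤ 1 → 0 ≤ ε → ε ≤ 1 →
      |(({m : ℕ | m ≤ Nat.fib k - 1 ∧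
            Int.fract ((m : ℝ) * ((1 + Real.sqrt 5) / 2) - x) ≤ ε}.ncard : ℝ)) -
          (Nat.fib k : ℝ) * ε| ≤ C := by
  refine ⟨3, by norm_num, fun k hk x ε _ _ _ hε => ?_⟩
  have hN : 0 < Nat.fib k := Nat.fib_pos.mpr hk
  have hcount : {m : ℕ | m ≤ Nat.fib k - 1 ∧ Int.fract ((m : ℝ) * φ - x) ≤ ε}.ncard =
      arcCount (fun m => m * φ) (Nat.fib k) x ε := by
    rw [arcCount, ← Set.ncard_coe_finset, coe_filter]
    congr! 3 with m
    rw [mem_range, Nat.le_sub_one_iff_lt hN]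
  have hσ := bijOn_mul_fib_succ_mod_fib hk
  have happrox := fun m (hm : m < Nat.fib k) => exists_abs_mul_goldenRatio_sub_le hm
  have hupper := arcCount_le_of_approx (p := fun m => m * φ) (q := fun j => j / Nat.fib k)
    hσ.mapsTo hσ.injOn happrox x ε
  have hlower := le_arcCount_of_approx (p := fun m => m * φ) (q := fun j => j / Nat.fib k)
    hσ.surjOn happrox x ε
  have hupper' := arcCount_div_le (β := ε + 2 * |ψ| ^ k) hN (x - |ψ| ^ k) (by positivity)
  have hlower' := le_arcCount_div (β := ε - 2 * |ψ| ^ k) hN (x + |ψ| ^ k)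
    (by linarith [pow_nonneg (abs_nonneg ψ) k])
  have hδ := fib_mul_abs_goldenConj_pow_le_one k
  rw [hcount, abs_le]
  constructor
  · linarith [(Nat.cast_le (α := ℝ)).mpr hlower]
  · linarith [(Nat.cast_le (α := ℝ)).mpr hupper]
end

section
/- For the van der Corput sequence in base 2 with 2^k − 1 points sorted as 0 = x'_0 < ... < x'_{2^k−1} < 1: each x'_s equals s written in binary with digits reversed and placed after the radix point. Consequently, if x'_l has inverse binary expansion A0C and x'_m has inverse binary expansion B1C (A, B of equal length, C a common suffix), then the integer whose radical inverse is the midpoint of [x'_l, x'_l + 2^{-k}] is smaller than the integer whose radical inverse is the midpoint of [x'_m, x'_m + 2^{-k}]. -/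
open Finset

def bitRev : ℕ → ℕ → ℕ
  | 0, _ => 0
  | k + 1, m => Nat.bit (m.testBit k) (bitRev k m)

lemma bitRev_lt_two_pow (k m : ℕ) : bitRev k m < 2 ^ k := by
  induction k with
  | zero => simp [bitRev]
  | succ k ih =>
    rw [bitRev, Nat.bit_val, pow_succ]
    cases m.testBit k <;> simp <;> omega

lemma testBit_bitRev {k i : ℕ} (m : ℕ) (hi : i < k) :
    (bitRev k m).testBit i = m.testBit (k - 1 - i) := by
  induction k generalizing i with
  | zero => omega
  | succ k ih =>
    cases i with
    | zero => rw [bitRev, Nat.testBit_bit_zero, Nat.add_sub_cancel, Nat.sub_zero]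
    | succ i => rw [bitRev, Nat.testBit_bit_succ, ih (by omega)]; congr 1; omega

lemma bitRev_bitRev {k m : ℕ} (hm : m < 2 ^ k) : bitRev k (bitRev k m) = m := by
  refine Nat.eq_of_testBit_eq fun i => ?_
  rcases lt_or_ge i k with hi | hi
  · rw [testBit_bitRev _ hi, testBit_bitRev _ (by omega)]
    congr 1; omega
  · have hpow : 2 ^ k ≤ 2 ^ i := Nat.pow_le_pow_right two_pos hi
    rw [Nat.testBit_lt_two_pow ((bitRev_lt_two_pow k _).trans_le hpow),
      Nat.testBit_lt_two_pow (hm.trans_le hpow)]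

lemma bitRev_lt_bitRev {n p a b : ℕ} (hp : p < n) (ha : a.testBit p = false)
    (hb : b.testBit p = true) (hlow : ∀ q < p, a.testBit q = b.testBit q) :
    bitRev n a < bitRev n b := by
  refine Nat.lt_of_testBit (n - 1 - p) ?_ ?_ fun j hj => ?_
  · rwa [testBit_bitRev _ (by omega), show n - 1 - (n - 1 - p) = p by omega]
  · rwa [testBit_bitRev _ (by omega), show n - 1 - (n - 1 - p) = p by omega]
  · rcases lt_or_ge j n with hjn | hjn
    · rw [testBit_bitRev _ hjn, testBit_bitRev _ hjn, hlow _ (by omega)]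
    · have hpow : 2 ^ n ≤ 2 ^ j := Nat.pow_le_pow_right two_pos hjn
      rw [Nat.testBit_lt_two_pow ((bitRev_lt_two_pow n a).trans_le hpow),
        Nat.testBit_lt_two_pow ((bitRev_lt_two_pow n b).trans_le hpow)]

lemma bitRev_div_two_pow (k m : ℕ) :
    (bitRev k m : ℝ) / 2 ^ k = ∑ j ∈ range k, if m.testBit j then 1 / 2 ^ (j + 1) else 0 := by
  induction k with
  | zero => simp [bitRev]
  | succ k ih =>
    rw [sum_range_succ, ← ih, bitRev, Nat.bit_val]
    cases m.testBit k <;> simp [pow_succ] <;> field_simp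

lemma vdc_eq_bitRev_div {k m : ℕ} (hm : m < 2 ^ k) : vdc m = (bitRev k m : ℝ) / 2 ^ k := by
  set F : ℕ → ℝ := fun j => if m.testBit j then 1 / 2 ^ (j + 1) else 0
  have hF : ∀ j, min m k ≤ j → F j = 0 := fun j hj => by
    have hlt : m < 2 ^ min m k := by
      rcases min_choice m k with h | h <;> rw [h]
      exacts [Nat.lt_two_pow_self, hm]
    simp [F, Nat.testBit_lt_two_pow (hlt.trans_le (Nat.pow_le_pow_right two_pos hj))]
  have hsum : ∀ n, min m k ≤ n → ∑ j ∈ range n, F j = ∑ j ∈ range (min m k), F j :=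
    fun n hn => (sum_subset (range_subset_range.2 hn) fun j _ hj =>
      hF j (by simp only [mem_range, not_lt] at hj; exact hj)).symm
  rw [bitRev_div_two_pow, vdc, hsum m (min_le_left _ _), hsum k (min_le_right _ _)]

lemma eq_bitRev_of_vdc_eq {n u a : ℕ} (hu : u < 2 ^ n) (h : vdc u = (a : ℝ) / 2 ^ n) :
    u = bitRev n a := by
  rw [vdc_eq_bitRev_div hu, div_left_inj' (by positivity), Nat.cast_inj] at h
  rw [← h, bitRev_bitRev hu]

lemma eqOn_of_strictMonoOn_of_forall_exists {α : Type*} [LinearOrder α] {N : ℕ} {f g : ℕ → α}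
    (hf : StrictMonoOn f (Set.Iio N)) (hg : StrictMonoOn g (Set.Iio N))
    (hfg : ∀ i < N, ∃ j < N, f i = g j) : ∀ i < N, f i = g i := by
  set s := (range N).image g
  have hcard : s.card = N := by
    rw [card_image_of_injOn (by simpa using hg.injOn), card_range]
  have hf' : StrictMono fun i : Fin N => f i := fun a b hab => hf a.isLt b.isLt hab
  have hg' : StrictMono fun i : Fin N => g i := fun a b hab => hg a.isLt b.isLt hab
  have hfs : ∀ i : Fin N, f i ∈ s := fun i => by
    obtain ⟨j, hj, hij⟩ := hfg i i.isLt
    exact mem_image.2 ⟨j, mem_range.2 hj, hij.symm⟩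
  have hgs : ∀ i : Fin N, g i ∈ s := fun i => mem_image_of_mem g (mem_range.2 i.isLt)
  intro i hi
  exact congrFun ((orderEmbOfFin_unique hcard hfs hf').trans
    (orderEmbOfFin_unique hcard hgs hg').symm) ⟨i, hi⟩

theorem stmt_13_general (k : ℕ) (x' : ℕ → ℝ)
    (hmono : ∀ i j, i < j → j ≤ 2 ^ k - 1 → x' i < x' j)
    (himg : ∀ y : ℝ, (∃ i, i ≤ 2 ^ k - 1 ∧ x' i = y) ↔
      (y = 0 ∨ ∃ m, 1 ≤ m ∧ m ≤ 2 ^ k - 1 ∧ vdc m = y)) :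
    (∀ s ≤ 2 ^ k - 1, x' s = (s : ℝ) / 2 ^ k) ∧
      (∀ l m : ℕ, l < 2 ^ k → m < 2 ^ k →
        (∃ p < k, l.testBit p = false ∧ m.testBit p = true ∧
          ∀ q < p, l.testBit q = m.testBit q) →
        ∀ u v : ℕ, 2 ^ k ≤ u → u < 2 ^ (k + 1) → 2 ^ k ≤ v → v < 2 ^ (k + 1) →
          vdc u = x' l + 1 / 2 ^ (k + 1) → vdc v = x' m + 1 / 2 ^ (k + 1) →
          u < v) := by
  have hN : 1 ≤ 2 ^ k := Nat.one_le_two_pow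
  have hgrid : ∀ s < 2 ^ k, x' s = (s : ℝ) / 2 ^ k := by
    refine eqOn_of_strictMonoOn_of_forall_exists (fun i _ j hj hij => hmono i j hij (by
      simp only [Set.mem_Iio] at hj; omega)) (fun i _ j _ hij => by gcongr) fun i hi => ?_
    rcases (himg (x' i)).1 ⟨i, by omega, rfl⟩ with h0 | ⟨m, -, hm, hvdc⟩
    · exact ⟨0, by omega, by simp [h0]⟩
    · exact ⟨bitRev k m, bitRev_lt_two_pow k m,
        by rw [← hvdc, vdc_eq_bitRev_div (k := k) (by omega)]⟩
  refine ⟨fun s hs => hgrid s (by omega), ?_⟩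
  rintro l m hl hm ⟨p, hp, hlp, hmp, hlow⟩ u v - hu - hv hvu hvv
  have hmid : ∀ n < 2 ^ k, x' n + 1 / 2 ^ (k + 1) = ((Nat.bit true n : ℕ) : ℝ) / 2 ^ (k + 1) :=
    fun n hn => by rw [hgrid n hn, Nat.bit_true_apply]; push_cast; field_simp; ring
  rw [eq_bitRev_of_vdc_eq hu (by rw [hvu, hmid l hl]),
    eq_bitRev_of_vdc_eq hv (by rw [hvv, hmid m hm])]
  refine bitRev_lt_bitRev (p := p + 1) (by omega) (by rwa [Nat.testBit_bit_succ])
    (by rwa [Nat.testBit_bit_succ]) fun q hq => ?_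
  cases q with
  | zero => simp only [Nat.testBit_bit_zero]
  | succ q => rw [Nat.testBit_bit_succ, Nat.testBit_bit_succ, hlow q (by omega)]

/-- For `2^k - 1` points sorted as `0 = x'_0 < ... < x'_{2^k-1} < 1`:
each `x'_s` equals `s / 2^k`, i.e. `s` written in binary with digits reversed
after the radix point.  Moreover, if the inverse binary expansion of `x'_l` is
`A0C` and that of `x'_m` is `B1C` (`A`, `B` of equal length, `C` a common
suffix — equivalently, there is a bit position `p` where `l` has a `0` and
`m` has a `1` while all lower-order bits of `l` and `m` agree), then the
integer `u` whose radical inverse is the midpoint of `[x'_l, x'_l + 2^{-k}]`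
is smaller than the integer `v` whose radical inverse is the midpoint of
`[x'_m, x'_m + 2^{-k}]`. -/
theorem stmt_13 (k : ℕ) (hk : 1 ≤ k) (x' : ℕ → ℝ)
    (hx0 : x' 0 = 0)
    (hmono : ∀ i j, i < j → j ≤ 2 ^ k - 1 → x' i < x' j)
    (hlt1 : x' (2 ^ k - 1) < 1)
    (himg : ∀ y : ℝ, (∃ i, i ≤ 2 ^ k - 1 ∧ x' i = y) ↔
      (y = 0 ∨ ∃ m, 1 ≤ m ∧ m ≤ 2 ^ k - 1 ∧ vdc m = y)) :
    (∀ s ≤ 2 ^ k - 1, x' s = (s : ℝ) / 2 ^ k) ∧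
      (∀ l m : ℕ, l < 2 ^ k → m < 2 ^ k →
        (∃ p < k, l.testBit p = false ∧ m.testBit p = true ∧
          ∀ q < p, l.testBit q = m.testBit q) →
        ∀ u v : ℕ, 2 ^ k ≤ u → u < 2 ^ (k + 1) → 2 ^ k ≤ v → v < 2 ^ (k + 1) →
          vdc u = x' l + 1 / 2 ^ (k + 1) → vdc v = x' m + 1 / 2 ^ (k + 1) →
          u < v) :=
  stmt_13_general k x' hmono himg
end

section
/- There exists a constant c > 0 such that: for all integers r ≥ 2 there exists N such that for all n ≥ N and all x with 0 ≤ x ≤ 1 − r/n, the number of m with 1 ≤ m ≤ n and x ≤ x_m ≤ x + r/n differs from r by at most c·log(r), where (x_m) is the van der Corput sequence in base 2. -/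
/-!
For `m < 2 ^ K` the value `vdc m` is `bitRev K m / 2 ^ K`, where `bitRev K` reverses the `K`
lowest binary digits. The `m` whose reversed digits fall into an aligned dyadic block
`[u 2^i, (u + 1) 2^i)` form one residue class modulo `2 ^ (K - i)`, so `n / 2^(K-i) ± 1` of them
lie in `(0, n]`. With `2 ^ K ≈ n`, the window `[x, x + r / n]` becomes an interval of at most `2r + 2`
reversed values; measured from a multiple of `2 ^ L ≈ 4r` it splits into `O(L)` aligned blocks,
so the counting errors add up to `O(log r)`.
-/

namespace VanDerCorput

open Finset

lemma card_filter_lt_eq_add {α : Type*} (s : Finset α) (f : α → ℕ) {a b : ℕ} (hab : a ≤ b) :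
    #{x ∈ s | f x < b} = #{x ∈ s | f x < a} + #{x ∈ s | a ≤ f x ∧ f x < b} := by
  rw [← card_filter_add_card_filter_not (s := {x ∈ s | f x < b}) (fun x => f x < a),
    filter_filter, filter_filter]
  congr 2 <;> exact filter_congr fun x _ => by omega

lemma abs_card_filter_modEq_sub_le {a b r : ℕ} (hab : a ≤ b) (hr : 0 < r) (v : ℕ) :
    |(#{x ∈ Ioc a b | x ≡ v [MOD r]} : ℝ) - ((b : ℝ) - a) / r| ≤ 1 := by
  have hcard := Nat.Ioc_filter_modEq_card a b hr v
  set A : ℚ := (a - v) / r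
  set B : ℚ := (b - v) / r
  have hBA : B - A = ((b : ℚ) - a) / r := by ring
  have hAB : A ≤ B := by
    rw [← sub_nonneg, hBA]
    exact div_nonneg (sub_nonneg.2 (by exact_mod_cast hab)) r.cast_nonneg
  have hfloor : ⌊A⌋ ≤ ⌊B⌋ := Int.floor_le_floor hAB
  rw [max_eq_left (sub_nonneg.2 hfloor)] at hcard
  have hq : |(#{x ∈ Ioc a b | x ≡ v [MOD r]} : ℚ) - ((b : ℚ) - a) / r| ≤ 1 := by
    rw [show (#{x ∈ Ioc a b | x ≡ v [MOD r]} : ℚ) = ⌊B⌋ - ⌊A⌋ by exact_mod_cast hcard, ← hBA,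
      abs_le]
    constructor <;> linarith [Int.floor_le A, Int.lt_floor_add_one A, Int.floor_le B,
      Int.lt_floor_add_one B]
  have := (Rat.cast_le (K := ℝ)).2 hq
  push_cast at this
  exact this

lemma modEq_two_pow_iff_testBit {k m m' : ℕ} :
    m ≡ m' [MOD 2 ^ k] ↔ ∀ j < k, m.testBit j = m'.testBit j := by
  constructor
  · intro h j hj
    simpa [Nat.testBit_mod_two_pow, hj] using congrArg (Nat.testBit · j) h
  · intro h
    refine Nat.eq_of_testBit_eq fun j => ?_
    simp only [Nat.testBit_mod_two_pow]
    by_cases hj : j < k <;> simp [hj, h]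

/-- Telescoping over the binary digits of `a`, from the top one down, keeps every step aligned. -/
lemma abs_sub_le_of_abs_dyadic_step_le (g : ℕ → ℝ) {B : ℕ}
    (hg : ∀ i t, 2 ^ i ∣ t → t + 2 ^ i ≤ B → |g (t + 2 ^ i) - g t| ≤ 1) (L : ℕ) :
    ∀ t a, 2 ^ L ∣ t → a < 2 ^ (L + 1) → t + a ≤ B → |g (t + a) - g t| ≤ L + 1 := by
  induction L with
  | zero =>
    intro t a _ ha htB
    interval_cases a
    · simp
    · simpa using hg 0 t (one_dvd t) htB
  | succ L ih =>
    intro t a ht ha htB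
    have ht' : 2 ^ L ∣ t := (pow_dvd_pow 2 L.le_succ).trans ht
    by_cases hsmall : a < 2 ^ (L + 1)
    · have := ih t a ht' hsmall htB
      push_cast
      linarith
    obtain ⟨a', rfl⟩ := Nat.exists_eq_add_of_le (not_lt.1 hsmall)
    have hfirst := hg (L + 1) t ht (by omega)
    have hrest := ih (t + 2 ^ (L + 1)) a' (dvd_add ht' (pow_dvd_pow 2 L.le_succ))
      (by rw [pow_succ _ (L + 1)] at ha; omega) (by omega)
    rw [← add_assoc]
    push_cast
    linarith [abs_sub_le (g (t + 2 ^ (L + 1) + a')) (g (t + 2 ^ (L + 1))) (g t)]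

lemma ceil_le_min_floor_add_one {x y : ℝ} {N : ℕ} (hxy : x ≤ y) (hyN : y ≤ N) :
    ⌈x⌉₊ ≤ min (⌊y⌋₊ + 1) N :=
  le_min (Nat.ceil_le.2 (by push_cast; linarith [Nat.lt_floor_add_one y]))
    (Nat.ceil_le.2 (hxy.trans hyN))

lemma abs_min_floor_add_one_sub_ceil_sub_le {x y : ℝ} {N : ℕ} (hx : 0 ≤ x) (hy : 0 ≤ y)
    (hyN : y ≤ N) : |((min (⌊y⌋₊ + 1) N : ℕ) : ℝ) - ⌈x⌉₊ - (y - x)| ≤ 2 := by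
  have hmin_le : ((min (⌊y⌋₊ + 1) N : ℕ) : ℝ) ≤ y + 1 := by
    push_cast
    exact (min_le_left _ _).trans (by linarith [Nat.floor_le hy])
  have hmin_gt : y - 1 < ((min (⌊y⌋₊ + 1) N : ℕ) : ℝ) := by
    push_cast
    exact lt_min (by linarith [Nat.lt_floor_add_one y]) (by linarith)
  rw [abs_le]
  constructor <;> linarith [Nat.le_ceil x, Nat.ceil_lt_add_one hx]

lemma two_mul_natLog_add_eight_le {r : ℕ} (hr : 2 ≤ r) :
    2 * (Nat.log 2 r : ℝ) + 8 ≤ 10 / Real.log 2 * Real.log r := by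
  have hlog2 : 0 < Real.log 2 := Real.log_pos one_lt_two
  have hnat := Real.natLog_le_logb r 2
  rw [Real.logb, Nat.cast_ofNat, le_div_iff₀ hlog2] at hnat
  have htwo : Real.log 2 ≤ Real.log r := Real.log_le_log two_pos (by exact_mod_cast hr)
  rw [div_mul_eq_mul_div, le_div_iff₀ hlog2]
  linarith

def bitRev : ℕ → ℕ → ℕ
  | 0, _ => 0
  | k + 1, m => 2 * bitRev k m + (m.testBit k).toNat

lemma bitRev_lt_two_pow (k m : ℕ) : bitRev k m < 2 ^ k := by
  induction k with
  | zero => simp [bitRev]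
  | succ k ih =>
    have := Bool.toNat_le (m.testBit k)
    rw [bitRev, pow_succ]
    omega

lemma bitRev_add_div_two_pow (k i m : ℕ) : bitRev (k + i) m / 2 ^ i = bitRev k m := by
  induction i with
  | zero => simp
  | succ i ih =>
    have := Bool.toNat_le (m.testBit (k + i))
    rw [← add_assoc, pow_succ', ← Nat.div_div_eq_div_mul, bitRev, ← ih]
    congr 1
    omega

lemma bitRev_eq_bitRev_iff {k m m' : ℕ} :
    bitRev k m = bitRev k m' ↔ ∀ j < k, m.testBit j = m'.testBit j := by
  induction k with
  | zero => simp [bitRev]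
  | succ k ih =>
    rw [Nat.forall_lt_succ_right, ← ih, bitRev, bitRev]
    have := Bool.toNat_le (m.testBit k)
    have := Bool.toNat_le (m'.testBit k)
    constructor
    · intro h
      refine ⟨by omega, ?_⟩
      have : (m.testBit k).toNat = (m'.testBit k).toNat := by omega
      cases hb : m.testBit k <;> cases hb' : m'.testBit k <;> simp_all
    · rintro ⟨h, hb⟩
      rw [h, hb]

lemma bitRev_eq_bitRev_iff_modEq {k m m' : ℕ} :
    bitRev k m = bitRev k m' ↔ m ≡ m' [MOD 2 ^ k] := by
  rw [bitRev_eq_bitRev_iff, modEq_two_pow_iff_testBit]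

lemma exists_bitRev_eq {k u : ℕ} (hu : u < 2 ^ k) : ∃ c, bitRev k c = u := by
  obtain ⟨c, -, hc⟩ := surj_on_of_inj_on_of_card_le (s := range (2 ^ k)) (t := range (2 ^ k))
    (fun c _ => bitRev k c) (fun c _ => mem_range.2 (bitRev_lt_two_pow k c))
    (fun a b ha hb h => by
      simpa [Nat.ModEq, Nat.mod_eq_of_lt (mem_range.1 ha), Nat.mod_eq_of_lt (mem_range.1 hb)]
        using bitRev_eq_bitRev_iff_modEq.1 h)
    le_rfl u (mem_range.2 hu)
  exact ⟨c, hc.symm⟩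

lemma sum_testBit_div_two_pow_eq_bitRev (k m : ℕ) :
    ∑ j ∈ range k, (if m.testBit j then (1 : ℝ) / 2 ^ (j + 1) else 0) = bitRev k m / 2 ^ k := by
  induction k with
  | zero => simp [bitRev]
  | succ k ih =>
    rw [sum_range_succ, ih, bitRev]
    cases m.testBit k <;> simp [pow_succ] <;> field_simp

lemma sum_testBit_div_two_pow_eq_of_le {k k' m : ℕ} (hm : m < 2 ^ k) (hk : k ≤ k') :
    ∑ j ∈ range k', (if m.testBit j then (1 : ℝ) / 2 ^ (j + 1) else 0) =
      ∑ j ∈ range k, (if m.testBit j then (1 : ℝ) / 2 ^ (j + 1) else 0) := by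
  refine (sum_subset (range_subset_range.2 hk) fun j _ hj => ?_).symm
  rw [Nat.testBit_lt_two_pow (hm.trans_le (Nat.pow_le_pow_right two_pos (by simpa using hj)))]
  simp

lemma vdc_eq_bitRev_div {K m : ℕ} (hm : m < 2 ^ K) : vdc m = bitRev K m / 2 ^ K := by
  rw [vdc, ← sum_testBit_div_two_pow_eq_bitRev]
  rcases le_total m K with h | h
  · exact (sum_testBit_div_two_pow_eq_of_le Nat.lt_two_pow_self h).symm
  · exact sum_testBit_div_two_pow_eq_of_le hm h

lemma setOf_vdc_mem_Icc_eq_filter {n K : ℕ} (hn : n < 2 ^ K) {x y : ℝ} (hy : 0 ≤ y) :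
    {m : ℕ | 1 ≤ m ∧ m ≤ n ∧ x ≤ vdc m ∧ vdc m ≤ y} =
      ↑{m ∈ Ioc 0 n | ⌈x * 2 ^ K⌉₊ ≤ bitRev K m ∧ bitRev K m < min (⌊y * 2 ^ K⌋₊ + 1) (2 ^ K)} := by
  ext m
  simp only [Set.mem_ofPred_eq, coe_filter, mem_Ioc, Nat.lt_iff_add_one_le, zero_add, and_assoc]
  refine and_congr_right fun _ => and_congr_right fun hm => ?_
  rw [vdc_eq_bitRev_div (hm.trans_lt hn), le_div_iff₀ (by positivity), div_le_iff₀ (by positivity),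
    Nat.ceil_le, ← Nat.lt_iff_add_one_le, lt_min_iff, Nat.lt_add_one_iff,
    Nat.le_floor_iff (by positivity)]
  simp [bitRev_lt_two_pow]

noncomputable def discrepancy (n K b : ℕ) : ℝ := #{m ∈ Ioc 0 n | bitRev K m < b} - n * b / 2 ^ K

lemma card_filter_bitRev_mem_Ico {n K a b : ℕ} (hab : a ≤ b) :
    (#{m ∈ Ioc 0 n | a ≤ bitRev K m ∧ bitRev K m < b} : ℝ) =
      discrepancy n K b - discrepancy n K a + n * ((b : ℝ) - a) / 2 ^ K := by
  rw [discrepancy, discrepancy, card_filter_lt_eq_add _ _ hab]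
  push_cast
  ring

/-- The reversed values in `[u 2^i, (u + 1) 2^i)` are those with `bitRev (K - i) m = u`,
a single residue class modulo `2 ^ (K - i)`. -/
lemma abs_discrepancy_add_two_pow_sub_le {n K i t : ℕ} (ht : 2 ^ i ∣ t)
    (htK : t + 2 ^ i ≤ 2 ^ K) :
    |discrepancy n K (t + 2 ^ i) - discrepancy n K t| ≤ 1 := by
  obtain ⟨u, rfl⟩ := ht
  have hiK : i ≤ K := (Nat.pow_le_pow_iff_right one_lt_two).1 (le_of_add_le_right htK)
  obtain ⟨k, rfl⟩ := Nat.exists_eq_add_of_le' hiK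
  have hu : u < 2 ^ k := by
    rw [pow_add, ← Nat.mul_add_one, mul_comm (2 ^ k)] at htK
    exact Nat.le_of_mul_le_mul_left htK (by positivity)
  obtain ⟨c, rfl⟩ := exists_bitRev_eq hu
  have hclass : {m ∈ Ioc 0 n | 2 ^ i * bitRev k c ≤ bitRev (k + i) m ∧
      bitRev (k + i) m < 2 ^ i * bitRev k c + 2 ^ i} = {m ∈ Ioc 0 n | m ≡ c [MOD 2 ^ k]} := by
    refine filter_congr fun m _ => ?_
    rw [← bitRev_eq_bitRev_iff_modEq, ← bitRev_add_div_two_pow k i m,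
      Nat.div_eq_iff (by positivity), mul_comm (bitRev k c)]
    have := Nat.two_pow_pos i
    omega
  have hcount := abs_card_filter_modEq_sub_le n.zero_le (Nat.two_pow_pos k) c
  rw [← hclass, card_filter_bitRev_mem_Ico (Nat.le_add_right _ _)] at hcount
  convert hcount using 2
  push_cast
  rw [pow_add]
  field_simp
  ring

lemma abs_discrepancy_sub_le {n K L a b : ℕ} (hab : a ≤ b) (hbK : b ≤ 2 ^ K)
    (hba : b - a ≤ 2 ^ L) :
    |discrepancy n K b - discrepancy n K a| ≤ 2 * L + 2 := by
  have hsteps := abs_sub_le_of_abs_dyadic_step_le (discrepancy n K)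
    (fun _ _ => abs_discrepancy_add_two_pow_sub_le) L
  set t := 2 ^ L * (a / 2 ^ L)
  have hta : t + a % 2 ^ L = a := Nat.div_add_mod a (2 ^ L)
  have hmod : a % 2 ^ L < 2 ^ L := Nat.mod_lt _ (by positivity)
  have hpow : 2 ^ (L + 1) = 2 * 2 ^ L := pow_succ' 2 L
  have ha := hsteps t (a - t) (dvd_mul_right _ _) (by omega) (by omega)
  have hb := hsteps t (b - t) (dvd_mul_right _ _) (by omega) (by omega)
  rw [Nat.add_sub_cancel' (by omega)] at ha hb
  linarith [abs_sub_le (discrepancy n K b) (discrepancy n K t) (discrepancy n K a),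
    abs_sub_comm (discrepancy n K t) (discrepancy n K a)]

lemma abs_ncard_vdc_mem_Icc_sub_le {n K L : ℕ} (hnK : n < 2 ^ K) {x y : ℝ} (hx : 0 ≤ x)
    (hxy : x ≤ y) (hy : y ≤ 1) (hwidth : (y - x) * 2 ^ K + 2 ≤ 2 ^ L) :
    |({m : ℕ | 1 ≤ m ∧ m ≤ n ∧ x ≤ vdc m ∧ vdc m ≤ y}.ncard : ℝ) - n * (y - x)| ≤ 2 * L + 4 := by
  have hK : (0 : ℝ) < 2 ^ K := by positivity
  have hyK : y * 2 ^ K ≤ ((2 ^ K : ℕ) : ℝ) := by push_cast; nlinarith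
  set a := ⌈x * 2 ^ K⌉₊
  set b := min (⌊y * 2 ^ K⌋₊ + 1) (2 ^ K)
  have hab : a ≤ b := ceil_le_min_floor_add_one (by nlinarith) hyK
  have hlen : |(b : ℝ) - a - (y - x) * 2 ^ K| ≤ 2 := by
    rw [sub_mul]
    exact abs_min_floor_add_one_sub_ceil_sub_le (by positivity)
      (mul_nonneg (hx.trans hxy) hK.le) hyK
  have hba : b - a ≤ 2 ^ L := by
    have : ((b - a : ℕ) : ℝ) ≤ 2 ^ L := by
      rw [Nat.cast_sub hab]
      linarith [(abs_le.1 hlen).2]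
    exact_mod_cast this
  have hdisc := abs_discrepancy_sub_le (n := n) hab (min_le_right _ _) hba
  have hmean : |n * ((b : ℝ) - a) / 2 ^ K - n * (y - x)| ≤ 2 := by
    rw [show n * ((b : ℝ) - a) / 2 ^ K - n * (y - x) = n / 2 ^ K * (b - a - (y - x) * 2 ^ K) by
      field_simp, abs_mul, abs_of_nonneg (by positivity)]
    have hnK' : (n : ℝ) / 2 ^ K ≤ 1 := by
      rw [div_le_one hK]; exact_mod_cast hnK.le
    exact (mul_le_mul hnK' hlen (abs_nonneg _) zero_le_one).trans_eq (one_mul 2)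
  rw [setOf_vdc_mem_Icc_eq_filter hnK (hx.trans hxy), Set.ncard_coe_finset,
    card_filter_bitRev_mem_Ico hab, add_sub_assoc]
  linarith [abs_add_le (discrepancy n K b - discrepancy n K a)
    (n * ((b : ℝ) - a) / 2 ^ K - n * (y - x))]

end VanDerCorput

open VanDerCorput in
theorem stmt_14 :
    ∃ c : ℝ, 0 < c ∧ ∀ r : ℕ, 2 ≤ r → ∃ N : ℕ, ∀ n : ℕ, N ≤ n →
      ∀ x : ℝ, 0 ≤ x → x ≤ 1 - (r : ℝ) / n →
        |(({m : ℕ | 1 ≤ m ∧ m ≤ n ∧ x ≤ vdc m ∧ vdc m ≤ x + (r : ℝ) / n}.ncard : ℝ))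
            - (r : ℝ)| ≤ c * Real.log r := by
  refine ⟨10 / Real.log 2, div_pos (by norm_num) (Real.log_pos one_lt_two),
    fun r hr => ⟨1, fun n hn x hx hxr => ?_⟩⟩
  set K := Nat.log 2 n + 1
  have hn0 : (0 : ℝ) < n := by exact_mod_cast hn
  have hnK : n < 2 ^ K := Nat.lt_pow_succ_log_self one_lt_two n
  have hKn : (2 : ℝ) ^ K ≤ 2 * n := by
    exact_mod_cast (pow_succ' 2 _).trans_le
      (Nat.mul_le_mul_left 2 (Nat.pow_log_le_self 2 (by omega)))
  have hrL : 2 * r + 2 ≤ 2 ^ (Nat.log 2 r + 2) := by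
    have := Nat.lt_pow_succ_log_self one_lt_two r
    rw [pow_succ] at this ⊢
    omega
  have hwidth : (x + r / n - x) * 2 ^ K + 2 ≤ 2 ^ (Nat.log 2 r + 2) := by
    have : (r : ℝ) / n * 2 ^ K ≤ 2 * r := by
      rw [div_mul_eq_mul_div, div_le_iff₀ hn0]
      nlinarith
    have hrL' : (2 * r + 2 : ℝ) ≤ 2 ^ (Nat.log 2 r + 2) := by exact_mod_cast hrL
    rw [add_sub_cancel_left]
    linarith
  have hcount := abs_ncard_vdc_mem_Icc_sub_le hnK hx
    (by linarith [div_nonneg r.cast_nonneg hn0.le]) (by linarith) hwidth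
  rw [add_sub_cancel_left, mul_div_cancel₀ _ hn0.ne'] at hcount
  push_cast at hcount
  linarith [two_mul_natLog_add_eight_le hr]
end

section
/- There exists a constant c > 0 such that: for all integers r ≥ 2 there exists N such that for all n ≥ N and all x ∈ [0,1], the number of m with 1 ≤ m ≤ n such that {mφ} lies in the cyclic interval [x, x + r/n] (mod 1) differs from r by at most c·log(r), where φ = (1+√5)/2. -/
/-!
Since `F_k φ - F_{k+1} = ψ^k` and `F_k |ψ|^k ≤ 1`, the coprime fractions `F_{k+1} / F_k` are
approximations of `φ` so good that any `F_k` consecutive points `{m φ}` meet an arc of length `L`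
in `F_k L ± 3` points. Cutting off from `[1, n]` the largest Fibonacci block `F_k ≤ n` leaves at
most `n / 2` points, so the expected count `r = n L` halves at each cut; after `log₂ r` cuts it is
below `1` and the rest contributes `O(1)`, for a total error `O(log r)`.
-/

open Finset Real
open scoped goldenRatio

theorem card_le_length_add_one_of_injOn_int {ι : Type*} {s : Finset ι} {f : ι → ℤ}
    (hf : Set.InjOn f s) {a ℓ : ℝ} (hℓ : 0 ≤ ℓ)
    (hs : ∀ i ∈ s, a ≤ f i ∧ (f i : ℝ) ≤ a + ℓ) :
    (#s : ℝ) ≤ ℓ + 1 := by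
  have hmaps : Set.MapsTo f s (Icc ⌈a⌉ ⌊a + ℓ⌋) := fun i hi => by
    obtain ⟨h₁, h₂⟩ := hs i hi
    simpa only [coe_Icc, Set.mem_Icc] using ⟨Int.ceil_le.2 h₁, Int.le_floor.2 h₂⟩
  have hcard := card_le_card_of_injOn f hmaps hf
  rw [Int.card_Icc] at hcard
  have hIcc : ((⌊a + ℓ⌋ + 1 - ⌈a⌉).toNat : ℝ) ≤ ℓ + 1 := by
    rcases le_or_gt 0 (⌊a + ℓ⌋ + 1 - ⌈a⌉) with h | h
    · rw [← Int.cast_natCast, Int.toNat_of_nonneg h]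
      push_cast
      linarith [Int.floor_le (a + ℓ), Int.le_ceil a]
    · rw [Int.toNat_of_nonpos h.le]
      push_cast
      linarith
  exact le_trans (by exact_mod_cast hcard) hIcc

/-- `{m α - x} ≤ L` says that `{m α}` lies in the arc `[x, x + L]` of `ℝ / ℤ`. -/
noncomputable def windowCount (α L x : ℝ) (n : ℕ) : ℕ :=
  #{m ∈ range n | Int.fract (((m : ℕ) : ℝ) * α - x) ≤ L}

section windowCount

variable {α L : ℝ}

theorem windowCount_add (α L x : ℝ) (n k : ℕ) :
    windowCount α L x (n + k) = windowCount α L x n + windowCount α L (x - n * α) k := by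
  simp only [windowCount, card_filter, sum_range_add]
  congr 1
  refine sum_congr rfl fun m _ => ?_
  rw [show ((n + m : ℕ) : ℝ) * α - x = m * α - (x - n * α) by push_cast; ring]

theorem windowCount_mono (α L x : ℝ) {n n' : ℕ} (h : n ≤ n') :
    windowCount α L x n ≤ windowCount α L x n' :=
  card_le_card (filter_subset_filter _ (range_subset_range.2 h))

/-- Points outside the arc `[x, x + L]` lie in the complementary arc `[x + L, x + 1]`. -/
theorem le_windowCount_add_windowCount_one_sub (x : ℝ) (hL : 0 ≤ L) (n : ℕ) :
    n ≤ windowCount α L x n + windowCount α (1 - L) (x + L) n := by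
  have hcompl : {m ∈ range n | ¬ Int.fract (((m : ℕ) : ℝ) * α - x) ≤ L} ⊆
      {m ∈ range n | Int.fract (((m : ℕ) : ℝ) * α - (x + L)) ≤ 1 - L} := by
    intro m
    simp only [mem_filter, not_le]
    rintro ⟨hm, hgt⟩
    refine ⟨hm, ?_⟩
    set v := (m : ℝ) * α - x
    have hfract : Int.fract (v - L) = Int.fract v - L := by
      rw [Int.fract_eq_iff]
      exact ⟨by linarith, by linarith [Int.fract_lt_one v], ⌊v⌋, by rw [Int.fract]; ring⟩
    rw [show (m : ℝ) * α - (x + L) = v - L by ring, hfract]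
    linarith [Int.fract_lt_one v]
  calc n = windowCount α L x n
        + #{m ∈ range n | ¬ Int.fract (((m : ℕ) : ℝ) * α - x) ≤ L} := by
        rw [windowCount, card_filter_add_card_filter_not, card_range]
    _ ≤ _ := Nat.add_le_add_left (card_le_card hcompl) _

variable {q : ℕ} {p : ℤ}

/-- The integers `m p - q ⌊m α - x⌋`, `m < q`, are distinct because `p` is invertible mod `q`,
and each lies within `1` of `q ({m α - x} + x)`. -/
theorem windowCount_le_of_isCoprime (x : ℝ) (hpq : IsCoprime (q : ℤ) p)
    (happrox : q * |q * α - p| ≤ 1) (hL : 0 ≤ L) :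
    (windowCount α L x q : ℝ) ≤ q * L + 3 := by
  set f : ℕ → ℤ := fun m => m * p - q * ⌊m * α - x⌋
  have hf : ∀ m, (f m : ℝ) = q * Int.fract (m * α - x) - m * (q * α - p) + q * x := by
    intro m
    simp only [f, Int.fract]
    push_cast
    ring
  have hinj :
      Set.InjOn f ({m ∈ range q | Int.fract (((m : ℕ) : ℝ) * α - x) ≤ L} : Finset ℕ) := by
    intro m₁ h₁ m₂ h₂ heq
    simp only [coe_filter, mem_range, Set.mem_ofPred_eq] at h₁ h₂
    have hdvd : (q : ℤ) ∣ p * (m₁ - m₂) :=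
      ⟨⌊m₁ * α - x⌋ - ⌊m₂ * α - x⌋, by
        simp only [f] at heq
        linear_combination heq⟩
    have := Int.eq_zero_of_abs_lt_dvd (hpq.dvd_of_dvd_mul_left hdvd) (by rw [abs_lt]; omega)
    omega
  have hrange : ∀ m ∈ {m ∈ range q | Int.fract (((m : ℕ) : ℝ) * α - x) ≤ L},
      q * x - 1 ≤ (f m : ℝ) ∧ (f m : ℝ) ≤ q * x - 1 + (q * L + 2) := by
    intro m hm
    simp only [mem_filter, mem_range] at hm
    have hdrift : |(m : ℝ) * (q * α - p)| ≤ 1 := by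
      rw [abs_mul, Nat.abs_cast]
      exact le_trans (mul_le_mul_of_nonneg_right (by exact_mod_cast hm.1.le) (abs_nonneg _))
        happrox
    have hq : (0 : ℝ) ≤ q := Nat.cast_nonneg q
    rw [hf]
    constructor <;> nlinarith [abs_le.1 hdrift, mul_le_mul_of_nonneg_left hm.2 hq,
      mul_nonneg hq (Int.fract_nonneg (m * α - x))]
  have := card_le_length_add_one_of_injOn_int hinj (by positivity) hrange
  rw [windowCount]
  linarith

theorem abs_windowCount_sub_le_of_isCoprime (x : ℝ) (hpq : IsCoprime (q : ℤ) p)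
    (happrox : q * |q * α - p| ≤ 1) (hL₀ : 0 ≤ L) (hL₁ : L ≤ 1) :
    |(windowCount α L x q : ℝ) - q * L| ≤ 3 := by
  have hupper := windowCount_le_of_isCoprime x hpq happrox hL₀
  have hcompl := windowCount_le_of_isCoprime (x + L) hpq happrox (sub_nonneg.2 hL₁)
  have hsum : (q : ℝ) ≤ windowCount α L x q + windowCount α (1 - L) (x + L) q := by
    exact_mod_cast le_windowCount_add_windowCount_one_sub x hL₀ q
  rw [abs_le]
  constructor <;> nlinarith

end windowCount

section Fibonacci

open Nat (fib)

theorem fib_mul_abs_fib_mul_goldenRatio_sub_fib_succ_le_one (k : ℕ) :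
    (fib k : ℝ) * |fib k * φ - ((fib (k + 1) : ℤ) : ℝ)| ≤ 1 := by
  have hdist : |fib k * φ - ((fib (k + 1) : ℤ) : ℝ)| = |ψ| ^ k := by
    rw [← abs_pow, ← fib_succ_sub_goldenRatio_mul_fib, abs_sub_comm, mul_comm]
    norm_cast
  have hfib : (fib k : ℝ) ≤ φ ^ k := by
    have := fib_succ_sub_goldenConj_mul_fib k
    have : (fib k : ℝ) ≤ fib (k + 1) := by exact_mod_cast Nat.fib_le_fib_succ
    nlinarith [goldenConj_neg, (Nat.cast_nonneg (fib k) : (0 : ℝ) ≤ _)]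
  calc (fib k : ℝ) * |fib k * φ - ((fib (k + 1) : ℤ) : ℝ)| ≤ φ ^ k * |ψ| ^ k := by
        rw [hdist]; gcongr
    _ = 1 := by
        rw [← mul_pow, abs_of_neg goldenConj_neg, mul_neg, goldenRatio_mul_goldenConj, neg_neg,
          one_pow]

theorem isCoprime_fib_fib_succ (k : ℕ) : IsCoprime (fib k : ℤ) (fib (k + 1) : ℤ) :=
  Nat.isCoprime_iff_coprime.2 (Nat.fib_coprime_fib_succ k)

theorem exists_fib_le_lt_fib_succ {n : ℕ} (hn : n ≠ 0) :
    ∃ k, fib k ≤ n ∧ n < fib (k + 1) ∧ fib (k + 1) ≤ 2 * fib k := by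
  refine ⟨Nat.greatestFib n, Nat.fib_greatestFib_le n, Nat.lt_fib_greatestFib_add_one n, ?_⟩
  obtain ⟨j, hj⟩ := Nat.exists_eq_succ_of_ne_zero (Nat.greatestFib_ne_zero.2 hn)
  rw [hj, Nat.fib_add_two]
  linarith [Nat.fib_le_fib_succ (n := j)]

variable {L : ℝ}

theorem windowCount_goldenRatio_le (x : ℝ) (hL : 0 ≤ L) (n : ℕ) :
    (windowCount φ L x n : ℝ) ≤ 2 * n * L + 3 := by
  rcases eq_or_ne n 0 with rfl | hn
  · simp [windowCount]
  obtain ⟨k, hkn, hnk, hk⟩ := exists_fib_le_lt_fib_succ hn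
  have hq : (fib (k + 1) : ℝ) ≤ 2 * n := by exact_mod_cast hk.trans (by omega)
  calc (windowCount φ L x n : ℝ) ≤ windowCount φ L x (fib (k + 1)) := by
        exact_mod_cast windowCount_mono φ L x hnk.le
    _ ≤ fib (k + 1) * L + 3 := windowCount_le_of_isCoprime x (isCoprime_fib_fib_succ (k + 1))
        (fib_mul_abs_fib_mul_goldenRatio_sub_fib_succ_le_one (k + 1)) hL
    _ ≤ 2 * n * L + 3 := by gcongr

theorem abs_windowCount_goldenRatio_sub_le (hL₀ : 0 ≤ L) (hL₁ : L ≤ 1) (j : ℕ) :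
    ∀ (n : ℕ) (x : ℝ), n * L ≤ 2 ^ j →
      |(windowCount φ L x n : ℝ) - n * L| ≤ 3 * j + 5 := by
  induction j with
  | zero =>
    intro n x hn
    have := windowCount_goldenRatio_le x hL₀ n
    rw [abs_le]
    constructor <;> push_cast at hn ⊢ <;> nlinarith [mul_nonneg (Nat.cast_nonneg n) hL₀]
  | succ j ih =>
    intro n x hn
    rcases eq_or_ne n 0 with rfl | hn₀
    · simp only [windowCount, range_zero, filter_empty, card_empty, CharP.cast_eq_zero,
        zero_mul, sub_zero, abs_zero]
      positivity
    obtain ⟨k, hkn, hnk, hk⟩ := exists_fib_le_lt_fib_succ hn₀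
    obtain ⟨m, rfl⟩ := Nat.exists_eq_add_of_le hkn
    have hm : (m : ℝ) * L ≤ 2 ^ j := by
      have : (m : ℝ) ≤ fib k := by exact_mod_cast (by omega : m ≤ fib k)
      push_cast at hn
      rw [pow_succ] at hn
      nlinarith
    have hblock := abs_windowCount_sub_le_of_isCoprime x (isCoprime_fib_fib_succ k)
      (fib_mul_abs_fib_mul_goldenRatio_sub_fib_succ_le_one k) hL₀ hL₁
    have hrest := ih m (x - fib k * φ) hm
    rw [windowCount_add]
    push_cast
    calc |(windowCount φ L x (fib k) : ℝ) + windowCount φ L (x - fib k * φ) m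
          - (fib k + m) * L|
        ≤ |(windowCount φ L x (fib k) : ℝ) - fib k * L|
          + |(windowCount φ L (x - fib k * φ) m : ℝ) - m * L| := by
          rw [show ∀ a b c d : ℝ, a + b - (c + d) * L = (a - c * L) + (b - d * L) by
            intros; ring]
          exact abs_add_le _ _
      _ ≤ 3 * (j + 1) + 5 := by linarith

end Fibonacci

theorem ncard_setOf_fract_le_eq_windowCount (α L x : ℝ) (n : ℕ) :
    {m : ℕ | 1 ≤ m ∧ m ≤ n ∧ Int.fract (m * α - x) ≤ L}.ncard =
      windowCount α L (x - α) n := by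
  have hset : {m : ℕ | 1 ≤ m ∧ m ≤ n ∧ Int.fract (m * α - x) ≤ L} =
      (· + 1) '' ↑{m ∈ range n | Int.fract (((m : ℕ) : ℝ) * α - (x - α)) ≤ L} := by
    ext m
    simp only [Set.mem_ofPred_eq, Set.mem_image, coe_filter, mem_range]
    constructor
    · rintro ⟨h₁, h₂, h₃⟩
      obtain ⟨k, rfl⟩ := Nat.exists_eq_add_of_le' h₁
      refine ⟨k, ⟨by omega, ?_⟩, rfl⟩
      convert h₃ using 2
      push_cast
      ring
    · rintro ⟨k, ⟨hk, hfract⟩, rfl⟩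
      refine ⟨by omega, by omega, ?_⟩
      convert hfract using 2
      push_cast
      ring
  rw [hset, Set.ncard_image_of_injective _ (add_left_injective 1), Set.ncard_coe_finset]
  rfl

theorem three_mul_natLog_two_add_eight_le {r : ℕ} (hr : 2 ≤ r) :
    3 * (Nat.log 2 r : ℝ) + 8 ≤ 22 * Real.log r := by
  have hlog2 : (1 / 2 : ℝ) < Real.log 2 := by linarith [log_two_gt_d9]
  have hlogr : Real.log 2 ≤ Real.log r := log_le_log two_pos (by exact_mod_cast hr)
  have hnatLog : (Nat.log 2 r : ℝ) * Real.log 2 ≤ Real.log r := by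
    have := natLog_le_logb r 2
    rw [Nat.cast_ofNat, logb, le_div_iff₀ (by linarith)] at this
    exact_mod_cast this
  nlinarith [(Nat.cast_nonneg _ : (0 : ℝ) ≤ Nat.log 2 r)]

theorem stmt_15 :
    ∃ c : ℝ, 0 < c ∧ ∀ r : ℕ, 2 ≤ r → ∃ N : ℕ, ∀ n : ℕ, N ≤ n →
      ∀ x : ℝ, 0 ≤ x → x ≤ 1 →
        |(({m : ℕ | 1 ≤ m ∧ m ≤ n ∧
              Int.fract ((m : ℝ) * ((1 + Real.sqrt 5) / 2) - x) ≤ (r : ℝ) / n}.ncard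
            : ℝ)) - (r : ℝ)| ≤ c * Real.log r := by
  refine ⟨22, by norm_num, fun r hr => ⟨r, fun n hrn x _ _ => ?_⟩⟩
  have hn : (0 : ℝ) < n := by exact_mod_cast (by omega : 0 < n)
  set L : ℝ := r / n
  have hL₀ : 0 ≤ L := by positivity
  have hL₁ : L ≤ 1 := div_le_one_of_le₀ (by exact_mod_cast hrn) hn.le
  have hnL : n * L = r := mul_div_cancel₀ _ hn.ne'
  have hpow : n * L ≤ 2 ^ (Nat.log 2 r + 1) := by
    rw [hnL]
    exact_mod_cast (Nat.lt_pow_succ_log_self one_lt_two r).le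
  have hcount := abs_windowCount_goldenRatio_sub_le hL₀ hL₁ _ n (x - φ) hpow
  rw [← ncard_setOf_fract_le_eq_windowCount, hnL] at hcount
  push_cast at hcount
  linarith [three_mul_natLog_two_add_eight_le hr]
end
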